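/- arXiv:0706.3463 — 5 statements merged into one kernel-verified Lean document; each statement's English description precedes it below -/
import Mathlib

section
/- Let τ be a real number such that lim_{n→∞} e^{iτ2^n} = 1. Then τ belongs to the set {2πk/2^n : k ∈ ℤ, n ∈ ℕ}. -/
/-!
View `τ` as a point `x` of the circle `ℝ / 2πℤ`; the hypothesis says `2ⁿ • x → 0`. Near `0`
(within a quarter period) doubling doubles the distance to `0`, so once `‖2ⁿ • x‖` is small
the sequence `‖2ⁿ • x‖` is nondecreasing; as it tends to `0`, it vanishes from then on.
Hence `2ᴺ • x = 0`, i.e. `2ᴺ τ ∈ 2πℤ`.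
-/

open Filter Topology

namespace AddCircle

variable {p : ℝ}

theorem exists_coe_eq_and_norm_eq_abs (x : AddCircle p) :
    ∃ y : ℝ, (y : AddCircle p) = x ∧ ‖x‖ = |y| := by
  induction x using QuotientAddGroup.induction_on with | H y => ?_
  refine ⟨y - round (p⁻¹ * y) * p, ?_, norm_eq p⟩
  rw [coe_sub, ← zsmul_eq_mul, coe_zsmul, coe_period, smul_zero, sub_zero]

theorem norm_two_nsmul_of_norm_le (hp : p ≠ 0) {x : AddCircle p} (hx : ‖x‖ ≤ |p| / 4) :
    ‖2 • x‖ = 2 * ‖x‖ := by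
  obtain ⟨y, rfl, hy⟩ := exists_coe_eq_and_norm_eq_abs x
  have h2y : |2 • y| = 2 * |y| := by rw [nsmul_eq_mul, Nat.cast_ofNat, abs_mul, abs_two]
  rw [← coe_nsmul, (norm_coe_eq_abs_iff p hp).2 (by linarith), h2y, hy]

theorem exists_two_pow_nsmul_eq_zero_of_tendsto (hp : p ≠ 0) {x : AddCircle p}
    (hx : Tendsto (fun n : ℕ => 2 ^ n • x) atTop (𝓝 0)) : ∃ N : ℕ, 2 ^ N • x = 0 := by
  have hnorm := tendsto_zero_iff_norm_tendsto_zero.1 hx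
  have hquarter : 0 < |p| / 4 := by positivity
  obtain ⟨N, hN⟩ := eventually_atTop.1 <| hnorm.eventually (eventually_le_nhds hquarter)
  have hmono : ∀ n ≥ N, ‖2 ^ N • x‖ ≤ ‖2 ^ n • x‖ := by
    refine Nat.le_induction le_rfl fun n hn ih => ?_
    rw [pow_succ', mul_smul, norm_two_nsmul_of_norm_le hp (hN n hn)]
    linarith [norm_nonneg (2 ^ n • x)]
  exact ⟨N, norm_le_zero_iff.1 <| ge_of_tendsto hnorm (eventually_atTop.2 ⟨N, hmono⟩)⟩

theorem tendsto_coe_two_pi_of_tendsto_exp {α : Type*} {l : Filter α} {u : α → ℝ}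
    (hu : Tendsto (fun a => Complex.exp (u a * Complex.I)) l (𝓝 1)) :
    Tendsto (fun a => (u a : AddCircle (2 * Real.pi))) l (𝓝 0) := by
  rw [homeomorphCircle'.isInducing.tendsto_nhds_iff, ← QuotientAddGroup.mk_zero]
  simp only [Function.comp_def, homeomorphCircle'_apply_mk, Circle.exp_zero]
  refine tendsto_subtype_rng.2 ?_
  simpa using hu

end AddCircle

/-- If `e^{iτ2^n} → 1` as `n → ∞`, then `τ = 2πk/2^n` for some `k ∈ ℤ`, `n ∈ ℕ`. -/
theorem dyadic_of_exp_two_pow_tendsto_one (τ : ℝ)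
    (h : Tendsto (fun n : ℕ => Complex.exp (Complex.I * τ * 2 ^ n)) atTop (𝓝 1)) :
    ∃ (k : ℤ) (n : ℕ), τ = 2 * Real.pi * k / 2 ^ n := by
  have hx : Tendsto (fun n : ℕ => 2 ^ n • (τ : AddCircle (2 * Real.pi))) atTop (𝓝 0) := by
    simp_rw [← AddCircle.coe_nsmul, nsmul_eq_mul]
    refine AddCircle.tendsto_coe_two_pi_of_tendsto_exp ?_
    convert h using 3
    push_cast
    ring
  obtain ⟨N, hN⟩ := AddCircle.exists_two_pow_nsmul_eq_zero_of_tendsto (by positivity) hx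
  rw [← AddCircle.coe_nsmul, AddCircle.coe_eq_zero_iff] at hN
  obtain ⟨k, hk⟩ := hN
  refine ⟨k, N, ?_⟩
  rw [zsmul_eq_mul, nsmul_eq_mul] at hk
  push_cast at hk
  field_simp
  linarith
end

section
/- Let X and Y be Banach spaces, and suppose there exist Banach spaces V and W such that X is isomorphic to Y ⊕ W, Y is isomorphic to X ⊕ V, X ⊕ X is isomorphic to X, and Y ⊕ Y is isomorphic to Y (all isomorphisms being linear homeomorphisms). Then X is isomorphic to Y. -/
namespace ContinuousLinearEquiv

variable {R X Y W : Type*} [Semiring R]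
  [TopologicalSpace X] [AddCommMonoid X] [Module R X]
  [TopologicalSpace Y] [AddCommMonoid Y] [Module R Y]
  [TopologicalSpace W] [AddCommMonoid W] [Module R W]

/-- `X ≅ Y × W ≅ (Y × Y) × W ≅ Y × (Y × W) ≅ Y × X`. -/
def prodSelfAbsorb (e : X ≃L[R] Y × W) (f : (Y × Y) ≃L[R] Y) : X ≃L[R] Y × X :=
  e.trans <| (f.symm.prodCongr (ContinuousLinearEquiv.refl R W)).trans <|
    (prodAssoc R Y Y W).trans <| (ContinuousLinearEquiv.refl R Y).prodCongr e.symm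

end ContinuousLinearEquiv

open ContinuousLinearEquiv in
theorem pelczynski_trick_general (X Y V W : Type*)
    [NormedAddCommGroup X] [NormedSpace ℝ X]
    [NormedAddCommGroup Y] [NormedSpace ℝ Y]
    [NormedAddCommGroup V] [NormedSpace ℝ V]
    [NormedAddCommGroup W] [NormedSpace ℝ W]
    (h1 : Nonempty (X ≃L[ℝ] Y × W)) (h2 : Nonempty (Y ≃L[ℝ] X × V))
    (h3 : Nonempty ((X × X) ≃L[ℝ] X)) (h4 : Nonempty ((Y × Y) ≃L[ℝ] Y)) :
    Nonempty (X ≃L[ℝ] Y) := by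
  obtain ⟨e1⟩ := h1
  obtain ⟨e2⟩ := h2
  obtain ⟨e3⟩ := h3
  obtain ⟨e4⟩ := h4
  exact ⟨(prodSelfAbsorb e1 e4).trans <| (prodComm ℝ Y X).trans (prodSelfAbsorb e2 e3).symm⟩

/-- Pełczyński's decomposition trick for Banach spaces. -/
theorem pelczynski_trick (X Y V W : Type*)
    [NormedAddCommGroup X] [NormedSpace ℝ X] [CompleteSpace X]
    [NormedAddCommGroup Y] [NormedSpace ℝ Y] [CompleteSpace Y]
    [NormedAddCommGroup V] [NormedSpace ℝ V] [CompleteSpace V]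
    [NormedAddCommGroup W] [NormedSpace ℝ W] [CompleteSpace W]
    (h1 : Nonempty (X ≃L[ℝ] Y × W)) (h2 : Nonempty (Y ≃L[ℝ] X × V))
    (h3 : Nonempty ((X × X) ≃L[ℝ] X)) (h4 : Nonempty ((Y × Y) ≃L[ℝ] Y)) :
    Nonempty (X ≃L[ℝ] Y) :=
  pelczynski_trick_general X Y V W h1 h2 h3 h4
end

section
/- Let 0 < a ≤ 1/2, let ν_a be the Bernoulli product measure ⊗(aδ_0+(1-a)δ_1) on Ω = {0,1}^ℕ, and let g be the dyadic odometer on Ω. For n ≥ 1, let K_n ⊆ Ω be the set of sequences of the form (1,1,...,1,0,x_{n+1},x_{n+2},...) with n−1 leading ones. Then for every Borel set E ⊆ K_n, ν_a(g(E)) = ((1-a)/a) · (a/(1-a))^{n-1} · ν_a(E). -/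
/-!
On `K_n` the odometer just flips the first `n` bits, so it maps `K_n` bijectively onto the
cylinder `[0, …, 0, 1]`. Flipping a prefix of length `n` changes the mass of a cylinder of length
`≥ n` only through its prefix, so on such cylinders the flip multiplies `ν_a` by the ratio
`ν_a[0^{n-1} 1] / ν_a[1^{n-1} 0] = ((1-a)/a) (a/(1-a))^{n-1}`. These cylinders form a generating
π-system, which carries the identity over to all Borel sets.
-/

open MeasureTheory Filter Topology ENNReal

/-- The dyadic odometer ("addition of `(1,0,0,...)` with carry to the right") on `{0,1}^ℕ`:
it flips the `n`-th bit exactly when all earlier bits equal `1`. -/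
def odometer (x : ℕ → Bool) : ℕ → Bool :=
  fun n => if ∀ k < n, x k = true then !(x n) else x n

/-- The inverse of the dyadic odometer ("subtraction of `1` with borrow"). -/
def odometerInv (x : ℕ → Bool) : ℕ → Bool :=
  fun n => if ∀ k < n, x k = false then !(x n) else x n

/-- `ν` is the Bernoulli product measure `⊗_{n} (a δ_0 + (1-a) δ_1)` on `{0,1}^ℕ`
(identifying `0` with `false` and `1` with `true`): it is a probability measure giving each
cylinder set determined by the first `n` coordinates its product measure. -/
def IsBernoulliProd (a : ℝ) (ν : Measure (ℕ → Bool)) : Prop :=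
  IsProbabilityMeasure ν ∧
    ∀ (n : ℕ) (s : Fin n → Bool),
      ν {x | ∀ i : Fin n, x i = s i} =
        ∏ i : Fin n, ENNReal.ofReal (if s i then 1 - a else a)

/-- The total variation distance `‖μ - ν‖` of two (finite) measures. -/
noncomputable def tvDist {Ω : Type*} [MeasurableSpace Ω] (μ ν : Measure Ω) : ℝ≥0∞ :=
  (μ - ν) Set.univ + (ν - μ) Set.univ

def prefixCyl {m : ℕ} (s : Fin m → Bool) : Set (ℕ → Bool) := {x | ∀ i : Fin m, x i = s i}

lemma measurableSet_prefixCyl {m : ℕ} (s : Fin m → Bool) : MeasurableSet (prefixCyl s) := by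
  have h : prefixCyl s = ⋂ i : Fin m, (fun x : ℕ → Bool => x i) ⁻¹' {s i} := by
    ext x; simp [prefixCyl]
  rw [h]
  exact .iInter fun i => measurable_pi_apply _ (measurableSet_singleton _)

lemma mem_prefixCyl_snoc {m : ℕ} {s : Fin m → Bool} {b : Bool} {x : ℕ → Bool} :
    x ∈ prefixCyl (Fin.snoc s b : Fin (m + 1) → Bool) ↔ x ∈ prefixCyl s ∧ x m = b := by
  simp [prefixCyl, Fin.forall_fin_succ']

lemma prefixCyl_append_subset {m q : ℕ} (u : Fin m → Bool) (v : Fin q → Bool) :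
    prefixCyl (Fin.append u v) ⊆ prefixCyl u := fun x hx i => by
  simpa using hx (Fin.castAdd q i)

lemma disjoint_prefixCyl_append {m q : ℕ} {u u' : Fin m → Bool} (h : u' ≠ u) (v : Fin q → Bool) :
    Disjoint (prefixCyl (Fin.append u' v)) (prefixCyl u) := by
  refine Set.disjoint_left.2 fun x hx hxu => h (funext fun i => ?_)
  rw [← prefixCyl_append_subset u' v hx i, hxu i]

lemma prefixCyl_inter_of_le {m₁ m₂ : ℕ} (h : m₁ ≤ m₂) (s₁ : Fin m₁ → Bool) (s₂ : Fin m₂ → Bool)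
    (hne : (prefixCyl s₁ ∩ prefixCyl s₂).Nonempty) :
    prefixCyl s₁ ∩ prefixCyl s₂ = prefixCyl s₂ := by
  obtain ⟨x₀, h₁, h₂⟩ := hne
  refine Set.inter_eq_self_of_subset_right fun x hx i => ?_
  rw [← h₁ i, h₂ ⟨i, i.isLt.trans_le h⟩, ← hx ⟨i, i.isLt.trans_le h⟩]

def prefixCylsFrom (n : ℕ) : Set (Set (ℕ → Bool)) :=
  {C | ∃ (q : ℕ) (s : Fin (n + q) → Bool), C = prefixCyl s}

lemma isPiSystem_prefixCylsFrom (n : ℕ) : IsPiSystem (prefixCylsFrom n) := by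
  rintro _ ⟨q₁, s₁, rfl⟩ _ ⟨q₂, s₂, rfl⟩ hne
  rcases le_total (n + q₁) (n + q₂) with h | h
  · rw [prefixCyl_inter_of_le h s₁ s₂ hne]; exact ⟨q₂, s₂, rfl⟩
  · rw [Set.inter_comm] at hne ⊢
    rw [prefixCyl_inter_of_le h s₂ s₁ hne]; exact ⟨q₁, s₁, rfl⟩

lemma measurableSet_generateFrom_eval_eq (n i : ℕ) (b : Bool) :
    MeasurableSet[.generateFrom (prefixCylsFrom n)] {x : ℕ → Bool | x i = b} := by
  have h : {x : ℕ → Bool | x i = b} =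
      ⋃ s : {s : Fin (n + (i + 1)) → Bool // s ⟨i, by omega⟩ = b}, prefixCyl s.1 := by
    ext x
    simp only [Set.mem_iUnion, Set.mem_ofPred_eq]
    refine ⟨fun hx => ⟨⟨fun j => x j, hx⟩, fun j => rfl⟩, ?_⟩
    rintro ⟨⟨s, rfl⟩, hx⟩
    exact hx ⟨i, by omega⟩
  rw [h]
  exact .iUnion fun s => .basic _ ⟨i + 1, s.1, rfl⟩

lemma generateFrom_prefixCylsFrom (n : ℕ) :
    (inferInstance : MeasurableSpace (ℕ → Bool)) = .generateFrom (prefixCylsFrom n) := by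
  refine le_antisymm (iSup_le fun i => ?_) (MeasurableSpace.generateFrom_le ?_)
  · rintro _ ⟨B, -, rfl⟩
    have h : (fun x : ℕ → Bool => x i) ⁻¹' B = ⋃ b ∈ B, {x : ℕ → Bool | x i = b} := by
      ext x; simp
    rw [h]
    exact .biUnion B.to_countable fun b _ => measurableSet_generateFrom_eval_eq n i b
  · rintro _ ⟨q, s, rfl⟩
    exact measurableSet_prefixCyl s

def flipPrefix (m : ℕ) (x : ℕ → Bool) : ℕ → Bool := fun k => if k < m then !x k else x k

lemma measurable_flipPrefix (m : ℕ) : Measurable (flipPrefix m) := by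
  refine measurable_pi_iff.2 fun k => ?_
  by_cases h : k < m
  · simpa [flipPrefix, h, Function.comp_def] using
      (measurable_of_countable not).comp (measurable_pi_apply k)
  · simpa [flipPrefix, h] using measurable_pi_apply k

lemma flipPrefix_involutive (m : ℕ) : Function.Involutive (flipPrefix m) := fun x => by
  funext k; by_cases h : k < m <;> simp [flipPrefix, h]

lemma preimage_flipPrefix_prefixCyl (m : ℕ) (u : Fin m → Bool) :
    flipPrefix m ⁻¹' prefixCyl u = prefixCyl (not ∘ u) := by
  ext x
  simp [prefixCyl, flipPrefix, Bool.not_eq_eq_eq_not]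

lemma preimage_flipPrefix_prefixCyl_append {m q : ℕ} (u : Fin m → Bool) (v : Fin q → Bool) :
    flipPrefix m ⁻¹' prefixCyl (Fin.append u v) = prefixCyl (Fin.append (not ∘ u) v) := by
  ext x
  simp [prefixCyl, flipPrefix, Fin.forall_fin_add, Bool.not_eq_eq_eq_not]

lemma odometer_eq_flipPrefix {p : ℕ} {x : ℕ → Bool} (hones : ∀ k < p, x k = true)
    (hzero : x p = false) : odometer x = flipPrefix (p + 1) x := by
  funext k
  by_cases hk : k < p + 1
  · rw [odometer, flipPrefix, if_pos hk, if_pos fun j hj => hones j (by omega)]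
  · rw [odometer, flipPrefix, if_neg hk,
      if_neg fun hall => by simpa [hzero] using hall p (by omega)]

def IsProductOnCylinders (ν : Measure (ℕ → Bool)) (w : Bool → ℝ≥0∞) : Prop :=
  ∀ (m : ℕ) (s : Fin m → Bool), ν (prefixCyl s) = ∏ i, w (s i)

namespace IsProductOnCylinders

variable {ν : Measure (ℕ → Bool)} {w : Bool → ℝ≥0∞}

lemma measure_prefixCyl_append (hν : IsProductOnCylinders ν w) {m q : ℕ} (u : Fin m → Bool)
    (v : Fin q → Bool) : ν (prefixCyl (Fin.append u v)) = ν (prefixCyl u) * ∏ j, w (v j) := by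
  rw [hν, hν, Fin.prod_univ_add]
  simp

lemma measure_prefixCyl_snoc (hν : IsProductOnCylinders ν w) {m : ℕ} (s : Fin m → Bool)
    (b : Bool) : ν (prefixCyl (Fin.snoc s b : Fin (m + 1) → Bool)) = ν (prefixCyl s) * w b := by
  rw [hν, hν, Fin.prod_univ_castSucc]
  simp

lemma measure_prefixCyl_const (hν : IsProductOnCylinders ν w) (m : ℕ) (b : Bool) :
    ν (prefixCyl (Function.const (Fin m) b)) = w b ^ m := by
  simp [hν _]

theorem smul_map_flipPrefix_restrict [IsFiniteMeasure ν]
    (hν : IsProductOnCylinders ν w) {m : ℕ} (u : Fin m → Bool) :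
    ν (prefixCyl u) • (ν.restrict (prefixCyl (not ∘ u))).map (flipPrefix m) =
      ν (prefixCyl (not ∘ u)) • ν.restrict (prefixCyl u) := by
  have : IsFiniteMeasure (ν (prefixCyl u) • (ν.restrict (prefixCyl (not ∘ u))).map
      (flipPrefix m)) := Measure.smul_finite _ (measure_ne_top _ _)
  refine ext_of_generate_finite _ (generateFrom_prefixCylsFrom m)
    (isPiSystem_prefixCylsFrom m) ?_ ?_
  · rintro _ ⟨q, s, rfl⟩
    obtain ⟨u', v, rfl⟩ : ∃ u' v, s = Fin.append u' v := ⟨_, _, Fin.append_castAdd_natAdd.symm⟩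
    simp only [Measure.smul_apply, smul_eq_mul,
      Measure.map_apply (measurable_flipPrefix m) (measurableSet_prefixCyl _),
      Measure.restrict_apply' (measurableSet_prefixCyl _), preimage_flipPrefix_prefixCyl_append]
    rcases eq_or_ne u' u with rfl | hne
    · rw [Set.inter_eq_left.2 (prefixCyl_append_subset _ _),
        Set.inter_eq_left.2 (prefixCyl_append_subset _ _),
        hν.measure_prefixCyl_append, hν.measure_prefixCyl_append]
      ring
    · have hne' : not ∘ u' ≠ not ∘ u := Bool.not_injective.comp_left.ne hne
      simp [(disjoint_prefixCyl_append hne v).inter_eq,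
        (disjoint_prefixCyl_append hne' v).inter_eq]
  · simp [Measure.map_apply (measurable_flipPrefix m) MeasurableSet.univ, mul_comm]

lemma mul_measure_preimage_flipPrefix [IsFiniteMeasure ν]
    (hν : IsProductOnCylinders ν w) {m : ℕ} {u : Fin m → Bool}
    {E : Set (ℕ → Bool)} (hE : MeasurableSet E) (hEu : E ⊆ prefixCyl u) :
    ν (prefixCyl u) * ν (flipPrefix m ⁻¹' E) = ν (prefixCyl (not ∘ u)) * ν E := by
  have h := congrArg (· E) (hν.smul_map_flipPrefix_restrict u)
  have hpre : flipPrefix m ⁻¹' E ⊆ prefixCyl (not ∘ u) :=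
    preimage_flipPrefix_prefixCyl m u ▸ Set.preimage_mono hEu
  simpa [Measure.map_apply (measurable_flipPrefix m) hE, Measure.restrict_apply hE,
    Measure.restrict_apply' (measurableSet_prefixCyl _), Set.inter_eq_left.2 hpre,
    Set.inter_eq_left.2 hEu] using h

end IsProductOnCylinders

def bernoulliWeight (a : ℝ) (b : Bool) : ℝ≥0∞ := ENNReal.ofReal (if b then 1 - a else a)

lemma IsBernoulliProd.isProductOnCylinders {a : ℝ} {ν : Measure (ℕ → Bool)}
    (hν : IsBernoulliProd a ν) : IsProductOnCylinders ν (bernoulliWeight a) :=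
  hν.2

lemma ofReal_div_mul_ofReal {x y : ℝ} (hy : 0 < y) :
    ENNReal.ofReal (x / y) * ENNReal.ofReal y = ENNReal.ofReal x := by
  rw [← ENNReal.ofReal_mul' hy.le, div_mul_cancel₀ x hy.ne']

lemma bernoulliWeight_ne_zero {a : ℝ} (ha0 : 0 < a) (ha1 : a < 1) (b : Bool) :
    bernoulliWeight a b ≠ 0 := by
  cases b <;> simp [bernoulliWeight, ha0, ha1]

lemma bernoulliWeight_false_pow_mul {a : ℝ} (ha0 : 0 < a) (ha1 : a < 1) (p : ℕ) :
    bernoulliWeight a false ^ p * bernoulliWeight a true =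
      bernoulliWeight a true ^ p * bernoulliWeight a false *
        (ENNReal.ofReal ((1 - a) / a) * ENNReal.ofReal (a / (1 - a)) ^ p) := by
  simp only [bernoulliWeight, Bool.false_eq_true, if_true, if_false]
  calc ENNReal.ofReal a ^ p * ENNReal.ofReal (1 - a)
      = (ENNReal.ofReal (a / (1 - a)) * ENNReal.ofReal (1 - a)) ^ p *
          (ENNReal.ofReal ((1 - a) / a) * ENNReal.ofReal a) := by
        rw [ofReal_div_mul_ofReal (by linarith), ofReal_div_mul_ofReal ha0]
    _ = _ := by ring

/-- On the set `K_n` of sequences starting with `n-1` ones followed by a zero, the odometer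
scales the Bernoulli measure `ν_a` by the factor `((1-a)/a)·(a/(1-a))^{n-1}`. -/
theorem measure_odometer_image_of_subset_K (a : ℝ) (ha0 : 0 < a) (ha : a ≤ 1 / 2)
    (ν : Measure (ℕ → Bool)) (hν : IsBernoulliProd a ν) (n : ℕ) (hn : 1 ≤ n)
    (E : Set (ℕ → Bool)) (hE : MeasurableSet E)
    (hEK : E ⊆ {x | (∀ k < n - 1, x k = true) ∧ x (n - 1) = false}) :
    ν (odometer '' E) =
      ENNReal.ofReal ((1 - a) / a) * ENNReal.ofReal (a / (1 - a)) ^ (n - 1) * ν E := by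
  obtain ⟨p, rfl⟩ : ∃ p, n = p + 1 := ⟨n - 1, by omega⟩
  rw [Nat.add_sub_cancel] at hEK ⊢
  have : IsProbabilityMeasure ν := hν.1
  have ha1 : a < 1 := by linarith
  have hcyl := hν.isProductOnCylinders
  set u : Fin (p + 1) → Bool := Fin.snoc (Function.const (Fin p) true) false
  have hEu : E ⊆ prefixCyl u := fun x hx =>
    mem_prefixCyl_snoc.2 ⟨fun i => (hEK hx).1 i i.isLt, (hEK hx).2⟩
  have himage : odometer '' E = flipPrefix (p + 1) ⁻¹' E := by
    rw [Set.image_congr fun x hx => odometer_eq_flipPrefix (hEK hx).1 (hEK hx).2,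
      (flipPrefix_involutive _).image_eq_preimage_symm]
  have hu : ν (prefixCyl u) = bernoulliWeight a true ^ p * bernoulliWeight a false := by
    simp [u, hcyl.measure_prefixCyl_snoc, hcyl.measure_prefixCyl_const]
  have hu0 : ν (prefixCyl u) ≠ 0 := by
    rw [hu]
    exact mul_ne_zero (pow_ne_zero _ (bernoulliWeight_ne_zero ha0 ha1 _))
      (bernoulliWeight_ne_zero ha0 ha1 _)
  refine (ENNReal.mul_right_inj hu0 (measure_ne_top ν _)).1 ?_
  rw [himage, hcyl.mul_measure_preimage_flipPrefix hE hEu, ← mul_assoc, hu,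
    ← bernoulliWeight_false_pow_mul ha0 ha1 p]
  simp [u, Fin.comp_snoc, Function.comp_const, hcyl.measure_prefixCyl_snoc,
    hcyl.measure_prefixCyl_const]
end

section
/- Let 0 < a ≤ 1/2, let ν_a be the Bernoulli product measure on Ω = {0,1}^ℕ and g the dyadic odometer. Then the total variation norm of the signed measure g^{-1}_*(ν_a) − ν_a equals 2 − 4a. Equivalently, ‖dg^{-1}(ν_a)/dν_a − 1‖_{L^1(Ω,ν_a)} = 2 − 4a. -/
open MeasureTheory Filter Topology ENNReal

/-!
Let `C m` be the cylinder of sequences starting with `m` ones followed by a zero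
(`prefixCylinder (m + 1) (runWord true m)`, with `true` for `1`). On the
preimage of `C m`, `g⁻¹` flips the first `m + 1` bits and leaves the tail alone, so on `C m`
the pushforward `g⁻¹_* ν` is `ν` scaled by the ratio `(a / (1 - a)) ^ m * ((1 - a) / a)` of the
weights of the two prefixes (checked on the sub-cylinders of `C m`, a generating π-system).
For `a ≤ 1/2` this ratio is `≥ 1` for `m = 0` and `≤ 1` for `m ≥ 1`. The `C m` cover `Ω` up to
the sequence `1 1 1 ⋯`, which is `g⁻¹_* ν`-null, so `C 0 = {x | x 0 = 0}` is a Hahn set for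
`g⁻¹_* ν - ν`, and the total variation is `2 (g⁻¹_* ν (C 0) - ν (C 0)) = 2 ((1 - a) - a)`.
-/

open Function

def prefixCylinder {α : Type*} (n : ℕ) (s : Fin n → α) : Set (ℕ → α) :=
  {x | ∀ i : Fin n, x i = s i}

section Cylinder

variable {α : Type*}

lemma mem_prefixCylinder_append {n k : ℕ} {p : Fin n → α} {t : Fin k → α} {x : ℕ → α} :
    x ∈ prefixCylinder (n + k) (Fin.append p t) ↔
      x ∈ prefixCylinder n p ∧ ∀ j : Fin k, x (n + j) = t j := by
  simp [prefixCylinder, Fin.forall_fin_add, Fin.append_left, Fin.append_right]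

lemma prefixCylinder_append_subset {n k : ℕ} (p : Fin n → α) (t : Fin k → α) :
    prefixCylinder (n + k) (Fin.append p t) ⊆ prefixCylinder n p :=
  fun _ hx => (mem_prefixCylinder_append.1 hx).1

lemma prefixCylinder_append_zero {n : ℕ} (p : Fin n → α) (t : Fin 0 → α) :
    prefixCylinder (n + 0) (Fin.append p t) = prefixCylinder n p := by
  ext x; exact mem_prefixCylinder_append.trans (by simp)

lemma disjoint_prefixCylinder {n : ℕ} {p q : Fin n → α} (h : p ≠ q) :
    Disjoint (prefixCylinder n p) (prefixCylinder n q) :=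
  Set.disjoint_left.2 fun _ hp hq => h (funext fun i => (hp i).symm.trans (hq i))

lemma prefixCylinder_inter_prefixCylinder_of_le {n₁ n₂ : ℕ} (h : n₁ ≤ n₂) (s₁ : Fin n₁ → α)
    (s₂ : Fin n₂ → α) (hne : (prefixCylinder n₁ s₁ ∩ prefixCylinder n₂ s₂).Nonempty) :
    prefixCylinder n₁ s₁ ∩ prefixCylinder n₂ s₂ = prefixCylinder n₂ s₂ := by
  obtain ⟨x, hx₁, hx₂⟩ := hne
  refine Set.inter_eq_self_of_subset_right fun y hy i => ?_
  have hi : (i : ℕ) < n₂ := i.2.trans_le h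
  exact (hy ⟨i, hi⟩).trans ((hx₂ ⟨i, hi⟩).symm.trans (hx₁ i))

def prefixCylindersFrom (α : Type*) (N : ℕ) : Set (Set (ℕ → α)) :=
  {S | ∃ k s, S = prefixCylinder (N + k) s}

lemma isPiSystem_prefixCylindersFrom (N : ℕ) : IsPiSystem (prefixCylindersFrom α N) := by
  rintro S₁ ⟨k₁, s₁, rfl⟩ S₂ ⟨k₂, s₂, rfl⟩ hne
  rcases le_total k₁ k₂ with h | h
  · rw [prefixCylinder_inter_prefixCylinder_of_le (by omega) s₁ s₂ hne]; exact ⟨k₂, s₂, rfl⟩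
  · rw [Set.inter_comm] at hne ⊢
    rw [prefixCylinder_inter_prefixCylinder_of_le (by omega) s₂ s₁ hne]; exact ⟨k₁, s₁, rfl⟩

variable [MeasurableSpace α]

lemma measurableSet_prefixCylinder [MeasurableSingletonClass α] (n : ℕ) (s : Fin n → α) :
    MeasurableSet (prefixCylinder n s) := by
  have : prefixCylinder n s = ⋂ i : Fin n, (fun x : ℕ → α => x i) ⁻¹' {s i} := by
    ext x; simp [prefixCylinder]
  rw [this]
  exact .iInter fun i => measurable_pi_apply _ (measurableSet_singleton _)

lemma generateFrom_prefixCylindersFrom [Countable α] [MeasurableSingletonClass α] (N : ℕ) :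
    MeasurableSpace.pi = MeasurableSpace.generateFrom (prefixCylindersFrom α N) := by
  refine le_antisymm ?_ (MeasurableSpace.generateFrom_le ?_)
  · refine iSup_le fun i => Measurable.comap_le ?_
    refine @measurable_to_countable' _ _ _ _ (.generateFrom _) _ fun b => ?_
    have hi : i < N + (i + 1) := by omega
    have : (fun x : ℕ → α => x i) ⁻¹' {b} =
        ⋃ (s : Fin (N + (i + 1)) → α) (_ : s ⟨i, hi⟩ = b), prefixCylinder _ s := by
      ext x
      simp only [Set.mem_preimage, Set.mem_singleton_iff, Set.mem_iUnion]
      exact ⟨fun hx => ⟨fun j => x j, hx, fun j => rfl⟩, fun ⟨s, hs, hxs⟩ => hs ▸ hxs ⟨i, hi⟩⟩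
    rw [this]
    exact .iUnion fun s => .iUnion fun _ => MeasurableSpace.measurableSet_generateFrom ⟨_, s, rfl⟩
  · rintro S ⟨k, s, rfl⟩
    exact measurableSet_prefixCylinder _ _

lemma restrict_prefixCylinder_eq_smul [Countable α] [MeasurableSingletonClass α]
    {μ ν : Measure (ℕ → α)} [IsFiniteMeasure μ] {n : ℕ} (q : Fin n → α) (c : ℝ≥0∞)
    (h : ∀ k (t : Fin k → α), μ (prefixCylinder (n + k) (Fin.append q t)) =
      c * ν (prefixCylinder (n + k) (Fin.append q t))) :
    μ.restrict (prefixCylinder n q) = c • ν.restrict (prefixCylinder n q) := by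
  refine ext_of_generate_finite _ (generateFrom_prefixCylindersFrom n)
    (isPiSystem_prefixCylindersFrom n) ?_ ?_
  · rintro S ⟨k, s, rfl⟩
    rw [Measure.smul_apply, Measure.restrict_apply (measurableSet_prefixCylinder _ _),
      Measure.restrict_apply (measurableSet_prefixCylinder _ _), smul_eq_mul,
      ← Fin.append_castAdd_natAdd (f := s)]
    by_cases hq : (fun i => s (Fin.castAdd k i)) = q
    · rw [hq, Set.inter_eq_left.2 (prefixCylinder_append_subset _ _), h]
    · rw [((disjoint_prefixCylinder hq).mono_left (prefixCylinder_append_subset _ _)).inter_eq]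
      simp
  · simpa [prefixCylinder_append_zero] using h 0 Fin.elim0

end Cylinder

section TotalVariation

variable {Ω : Type*} [MeasurableSpace Ω] {μ ν : Measure Ω} {s : Set Ω}

lemma sub_apply_univ_of_restrict_le [IsFiniteMeasure ν] (hs : MeasurableSet s)
    (h₁ : ν.restrict s ≤ μ.restrict s) (h₂ : μ.restrict sᶜ ≤ ν.restrict sᶜ) :
    (μ - ν) Set.univ = μ s - ν s := by
  rw [← measure_add_measure_compl (μ := μ - ν) hs,
    Measure.sub_apply_eq_zero_of_restrict_le_restrict h₂ hs.compl, add_zero,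
    ← Measure.restrict_apply_self, Measure.restrict_sub_eq_restrict_sub_restrict hs,
    Measure.sub_apply hs h₁, Measure.restrict_apply_self, Measure.restrict_apply_self]

lemma tvDist_eq_two_mul_of_restrict_le [IsProbabilityMeasure μ] [IsProbabilityMeasure ν]
    (hs : MeasurableSet s) (h₁ : ν.restrict s ≤ μ.restrict s)
    (h₂ : μ.restrict sᶜ ≤ ν.restrict sᶜ) :
    tvDist μ ν = 2 * (μ s - ν s) := by
  rw [tvDist, sub_apply_univ_of_restrict_le hs h₁ h₂,
    sub_apply_univ_of_restrict_le hs.compl h₂ (by rwa [compl_compl]),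
    prob_compl_eq_one_sub hs, prob_compl_eq_one_sub hs,
    ENNReal.sub_sub_sub_cancel_left ENNReal.one_ne_top prob_le_one, two_mul]

lemma restrict_iUnion_le_restrict_iUnion {ι : Type*} [Countable ι] {s : ι → Set Ω}
    (hd : Pairwise (Disjoint on s)) (hm : ∀ i, MeasurableSet (s i))
    (h : ∀ i, μ.restrict (s i) ≤ ν.restrict (s i)) :
    μ.restrict (⋃ i, s i) ≤ ν.restrict (⋃ i, s i) :=
  Measure.le_iff.2 fun t ht => by
    rw [Measure.restrict_iUnion_apply hd hm ht, Measure.restrict_iUnion_apply hd hm ht]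
    exact ENNReal.tsum_le_tsum fun i => h i t

end TotalVariation

section Odometer

def runWord (b : Bool) (m : ℕ) : Fin (m + 1) → Bool := Fin.snoc (fun _ => b) (!b)

def flipBelow (n : ℕ) (x : ℕ → Bool) : ℕ → Bool := fun i => if i < n then !x i else x i

lemma mem_prefixCylinder_runWord {b : Bool} {m : ℕ} {x : ℕ → Bool} :
    x ∈ prefixCylinder (m + 1) (runWord b m) ↔ (∀ k < m, x k = b) ∧ x m = !b := by
  simp [prefixCylinder, runWord, Fin.forall_iff_castSucc, Fin.forall_iff, and_comm]

lemma not_runWord (b : Bool) (m : ℕ) : (fun i => !runWord b m i) = runWord (!b) m := by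
  funext i
  induction i using Fin.lastCases <;> simp [runWord]

lemma flipBelow_mem_prefixCylinder_append {n k : ℕ} {p : Fin n → Bool} {t : Fin k → Bool}
    {x : ℕ → Bool} :
    flipBelow n x ∈ prefixCylinder (n + k) (Fin.append p t) ↔
      x ∈ prefixCylinder (n + k) (Fin.append (fun i => !p i) t) := by
  rw [mem_prefixCylinder_append, mem_prefixCylinder_append]
  simp [prefixCylinder, flipBelow, Bool.not_eq_eq_eq_not]

lemma odometerInv_eq_flipBelow {m : ℕ} {x : ℕ → Bool}
    (hx : x ∈ prefixCylinder (m + 1) (runWord false m)) :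
    odometerInv x = flipBelow (m + 1) x := by
  rw [mem_prefixCylinder_runWord] at hx
  funext n
  by_cases hn : n < m + 1
  · have : ∀ k < n, x k = false := fun k hk => hx.1 k (by omega)
    simp only [odometerInv, flipBelow]
    rw [if_pos this, if_pos hn]
  · have : ¬ ∀ k < n, x k = false := fun h => by simpa [hx.2] using h m (by omega)
    simp only [odometerInv, flipBelow]
    rw [if_neg this, if_neg hn]

lemma forall_lt_odometerInv_eq_true_iff {x : ℕ → Bool} {n : ℕ} :
    (∀ k < n, odometerInv x k = true) ↔ ∀ k < n, x k = false := by
  induction n with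
  | zero => simp
  | succ n ih =>
    simp only [Nat.lt_succ_iff_lt_or_eq, or_imp, forall_and, forall_eq, ih]
    refine and_congr_right fun h => ?_
    simp only [odometerInv, if_pos h, Bool.not_eq_true']

lemma mem_of_odometerInv_mem {m : ℕ} {x : ℕ → Bool}
    (h : odometerInv x ∈ prefixCylinder (m + 1) (runWord true m)) :
    x ∈ prefixCylinder (m + 1) (runWord false m) := by
  rw [mem_prefixCylinder_runWord] at h ⊢
  have hlt := forall_lt_odometerInv_eq_true_iff.1 h.1
  refine ⟨hlt, ?_⟩
  have hm := h.2
  simp only [odometerInv, if_pos hlt] at hm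
  simpa using hm

lemma odometerInv_preimage_prefixCylinder_append (m : ℕ) {k : ℕ} (t : Fin k → Bool) :
    odometerInv ⁻¹' prefixCylinder (m + 1 + k) (Fin.append (runWord true m) t) =
      prefixCylinder (m + 1 + k) (Fin.append (runWord false m) t) := by
  ext x
  constructor
  · intro hx
    have hx' := mem_of_odometerInv_mem (prefixCylinder_append_subset _ _ hx)
    rwa [Set.mem_preimage, odometerInv_eq_flipBelow hx', flipBelow_mem_prefixCylinder_append,
      not_runWord] at hx
  · intro hx
    rwa [Set.mem_preimage, odometerInv_eq_flipBelow (prefixCylinder_append_subset _ _ hx),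
      flipBelow_mem_prefixCylinder_append, not_runWord]

lemma odometerInv_preimage_forall_true_subset :
    odometerInv ⁻¹' {x | ∀ n, x n = true} ⊆ {x | ∀ n, x n = false} :=
  fun _ hx n => forall_lt_odometerInv_eq_true_iff.1 (fun k _ => hx k) n n.lt_succ_self

lemma measurable_odometerInv : Measurable odometerInv := by
  refine measurable_pi_iff.2 fun n => Measurable.ite ?_ (by fun_prop) (measurable_pi_apply n)
  exact measurableSet_setOfPred.2 (by measurability)

lemma pairwise_disjoint_prefixCylinder_runWord (b : Bool) :
    Pairwise (Disjoint on fun m => prefixCylinder (m + 1) (runWord b m)) := by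
  intro i j hij
  refine Set.disjoint_left.2 fun x hi hj => ?_
  rw [mem_prefixCylinder_runWord] at hi hj
  rcases lt_or_gt_of_ne hij with h | h
  · simpa [hi.2] using hj.1 i h
  · simpa [hj.2] using hi.1 j h

lemma exists_mem_prefixCylinder_runWord {b : Bool} {x : ℕ → Bool} (h : ∃ n, x n = !b) :
    ∃ m, x ∈ prefixCylinder (m + 1) (runWord b m) := by
  classical
  refine ⟨Nat.find h, mem_prefixCylinder_runWord.2 ⟨fun k hk => ?_, Nat.find_spec h⟩⟩
  simpa using Nat.find_min h hk

lemma compl_prefixCylinder_runWord_zero_diff_subset :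
    (prefixCylinder 1 (runWord true 0))ᶜ \ ⋃ m, prefixCylinder (m + 2) (runWord true (m + 1)) ⊆
      {x | ∀ n, x n = true} := by
  rintro x ⟨hx0, hxC⟩
  by_contra hx
  simp only [Set.mem_ofPred_eq, not_forall] at hx
  obtain ⟨m, hm⟩ := exists_mem_prefixCylinder_runWord (b := true) (by simpa using hx)
  cases m with
  | zero => exact hx0 hm
  | succ m => exact hxC (Set.mem_iUnion.2 ⟨m, hm⟩)

end Odometer

section Bernoulli

variable {a : ℝ} {ν : Measure (ℕ → Bool)}

lemma IsBernoulliProd.measure_prefixCylinder (hν : IsBernoulliProd a ν) (n : ℕ)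
    (s : Fin n → Bool) :
    ν (prefixCylinder n s) = ∏ i : Fin n, ENNReal.ofReal (if s i then 1 - a else a) :=
  hν.2 n s

lemma IsBernoulliProd.measure_prefixCylinder_append (hν : IsBernoulliProd a ν) {n k : ℕ}
    (p : Fin n → Bool) (t : Fin k → Bool) :
    ν (prefixCylinder (n + k) (Fin.append p t)) =
      ν (prefixCylinder n p) * ν (prefixCylinder k t) := by
  simp only [hν.measure_prefixCylinder, Fin.prod_univ_add, Fin.append_left, Fin.append_right]

lemma IsBernoulliProd.measure_prefixCylinder_runWord (hν : IsBernoulliProd a ν) (b : Bool)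
    (m : ℕ) :
    ν (prefixCylinder (m + 1) (runWord b m)) =
      ENNReal.ofReal (if b then 1 - a else a) ^ m * ENNReal.ofReal (if b then a else 1 - a) := by
  cases b <;> simp [hν.measure_prefixCylinder, runWord, Fin.prod_univ_castSucc]

lemma IsBernoulliProd.measure_forall_eq_false (hν : IsBernoulliProd a ν) (ha : a < 1) :
    ν {x | ∀ n, x n = false} = 0 := by
  have hlim : Tendsto (fun n : ℕ => ENNReal.ofReal a ^ n) atTop (𝓝 0) :=
    ENNReal.tendsto_pow_atTop_nhds_zero_of_lt_one (ENNReal.ofReal_lt_one.2 ha)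
  refine le_antisymm (ge_of_tendsto' hlim fun n => ?_) bot_le
  calc ν {x | ∀ n, x n = false} ≤ ν (prefixCylinder n fun _ => false) :=
        measure_mono fun x hx i => hx i
    _ = ENNReal.ofReal a ^ n := by simp [hν.measure_prefixCylinder]

end Bernoulli

section OdometerMeasure

variable {a : ℝ} {ν : Measure (ℕ → Bool)}

lemma IsBernoulliProd.map_odometerInv_prefixCylinder_append (hν : IsBernoulliProd a ν) (m : ℕ)
    {k : ℕ} (t : Fin k → Bool) :
    ν.map odometerInv (prefixCylinder (m + 1 + k) (Fin.append (runWord true m) t)) =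
      ν (prefixCylinder (m + 1) (runWord false m)) * ν (prefixCylinder k t) := by
  rw [Measure.map_apply measurable_odometerInv (measurableSet_prefixCylinder _ _),
    odometerInv_preimage_prefixCylinder_append, hν.measure_prefixCylinder_append]

lemma IsBernoulliProd.map_odometerInv_prefixCylinder_runWord (hν : IsBernoulliProd a ν)
    (m : ℕ) :
    ν.map odometerInv (prefixCylinder (m + 1) (runWord true m)) =
      ν (prefixCylinder (m + 1) (runWord false m)) := by
  simpa [prefixCylinder_append_zero, hν.measure_prefixCylinder] using
    hν.map_odometerInv_prefixCylinder_append m Fin.elim0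

lemma IsBernoulliProd.restrict_map_odometerInv (hν : IsBernoulliProd a ν) (ha0 : 0 < a)
    (ha1 : a < 1) (m : ℕ) :
    (ν.map odometerInv).restrict (prefixCylinder (m + 1) (runWord true m)) =
      ENNReal.ofReal ((a / (1 - a)) ^ m * ((1 - a) / a)) •
        ν.restrict (prefixCylinder (m + 1) (runWord true m)) := by
  have := hν.1
  refine restrict_prefixCylinder_eq_smul _ _ fun k t => ?_
  have h1a : 0 < 1 - a := by linarith
  rw [hν.map_odometerInv_prefixCylinder_append, hν.measure_prefixCylinder_append,
    hν.measure_prefixCylinder_runWord, hν.measure_prefixCylinder_runWord, ← mul_assoc]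
  congr 1
  simp only [Bool.false_eq_true, if_false, if_true]
  rw [← ENNReal.ofReal_pow ha0.le, ← ENNReal.ofReal_pow h1a.le,
    ← ENNReal.ofReal_mul (by positivity), ← ENNReal.ofReal_mul (by positivity),
    ← ENNReal.ofReal_mul (by positivity)]
  congr 1
  rw [div_pow]
  field_simp

lemma IsBernoulliProd.restrict_le_restrict_map_odometerInv (hν : IsBernoulliProd a ν)
    (ha0 : 0 < a) (ha : a ≤ 1 / 2) :
    ν.restrict (prefixCylinder 1 (runWord true 0)) ≤
      (ν.map odometerInv).restrict (prefixCylinder 1 (runWord true 0)) := by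
  rw [hν.restrict_map_odometerInv ha0 (by linarith) 0, pow_zero, one_mul]
  refine Measure.le_iff'.2 fun s => le_mul_of_one_le_left' ?_
  exact ENNReal.one_le_ofReal.2 ((one_le_div ha0).2 (by linarith))

lemma IsBernoulliProd.restrict_map_odometerInv_succ_le (hν : IsBernoulliProd a ν)
    (ha0 : 0 < a) (ha : a ≤ 1 / 2) (m : ℕ) :
    (ν.map odometerInv).restrict (prefixCylinder (m + 2) (runWord true (m + 1))) ≤
      ν.restrict (prefixCylinder (m + 2) (runWord true (m + 1))) := by
  have h1a : 0 < 1 - a := by linarith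
  have hratio : (a / (1 - a)) ^ (m + 1) * ((1 - a) / a) = (a / (1 - a)) ^ m := by
    rw [pow_succ]
    field_simp
  rw [hν.restrict_map_odometerInv ha0 (by linarith) (m + 1), hratio]
  refine Measure.le_iff'.2 fun s => mul_le_of_le_one_left' ?_
  exact ENNReal.ofReal_le_one.2 (pow_le_one₀ (by positivity) ((div_le_one h1a).2 (by linarith)))

lemma IsBernoulliProd.map_odometerInv_forall_eq_true (hν : IsBernoulliProd a ν) (ha1 : a < 1) :
    ν.map odometerInv {x | ∀ n, x n = true} = 0 := by
  rw [Measure.map_apply measurable_odometerInv (by measurability)]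
  exact measure_mono_null odometerInv_preimage_forall_true_subset
    (hν.measure_forall_eq_false ha1)

lemma IsBernoulliProd.restrict_compl_map_odometerInv_le (hν : IsBernoulliProd a ν)
    (ha0 : 0 < a) (ha : a ≤ 1 / 2) :
    (ν.map odometerInv).restrict (prefixCylinder 1 (runWord true 0))ᶜ ≤
      ν.restrict (prefixCylinder 1 (runWord true 0))ᶜ := by
  set C : ℕ → Set (ℕ → Bool) := fun m => prefixCylinder (m + 2) (runWord true (m + 1))
  have hnull : ν.map odometerInv {x | ∀ n, x n = true} = 0 :=
    hν.map_odometerInv_forall_eq_true (by linarith)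
  have hsub : ⋃ m, C m ⊆ (prefixCylinder 1 (runWord true 0))ᶜ :=
    Set.iUnion_subset fun m => Set.subset_compl_iff_disjoint_right.2
      (pairwise_disjoint_prefixCylinder_runWord true m.succ_ne_zero)
  calc (ν.map odometerInv).restrict (prefixCylinder 1 (runWord true 0))ᶜ
      ≤ (ν.map odometerInv).restrict (⋃ m, C m) :=
        Measure.restrict_mono_ae
          (ae_le_set.2 (measure_mono_null compl_prefixCylinder_runWord_zero_diff_subset hnull))
    _ ≤ ν.restrict (⋃ m, C m) :=
        restrict_iUnion_le_restrict_iUnion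
          ((pairwise_disjoint_prefixCylinder_runWord true).comp_of_injective
            (add_left_injective 1))
          (fun m => measurableSet_prefixCylinder _ _)
          (hν.restrict_map_odometerInv_succ_le ha0 ha)
    _ ≤ ν.restrict (prefixCylinder 1 (runWord true 0))ᶜ := Measure.restrict_mono_set _ hsub

end OdometerMeasure

/-- The total variation norm of `g^{-1}_*(ν_a) - ν_a` equals `2 - 4a`. -/
theorem tvDist_odometerInv_pushforward (a : ℝ) (ha0 : 0 < a) (ha : a ≤ 1 / 2)
    (ν : Measure (ℕ → Bool)) (hν : IsBernoulliProd a ν) :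
    tvDist (Measure.map odometerInv ν) ν = ENNReal.ofReal (2 - 4 * a) := by
  have := hν.1
  have : IsProbabilityMeasure (ν.map odometerInv) :=
    Measure.isProbabilityMeasure_map measurable_odometerInv.aemeasurable
  rw [tvDist_eq_two_mul_of_restrict_le (measurableSet_prefixCylinder _ _)
      (hν.restrict_le_restrict_map_odometerInv ha0 ha)
      (hν.restrict_compl_map_odometerInv_le ha0 ha),
    hν.map_odometerInv_prefixCylinder_runWord, hν.measure_prefixCylinder_runWord,
    hν.measure_prefixCylinder_runWord]
  simp only [pow_zero, one_mul, Bool.false_eq_true, if_false, if_true]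
  rw [← ENNReal.ofReal_sub _ ha0.le, ← ENNReal.ofReal_ofNat 2,
    ← ENNReal.ofReal_mul zero_le_two]
  congr 1
  ring
end

section
/- Let 0 < a ≤ 1/2 and let σ be the automorphism of L^∞({0,1}^ℕ, ν_a) induced by the dyadic odometer, and let θ = (θ_s)_{s∈ℝ} be the associated flow under the constant ceiling 1 on L^∞({0,1}^ℕ × [0,1), ν_a × dx). Fix τ = 2πk/2^n with k ∈ ℤ, n ∈ ℕ. Then there exists a unitary u ∈ L^∞({0,1}^ℕ × [0,1)) with θ_s(u) = e^{iτs} u for all s ∈ ℝ; explicitly, u(x,y) = u₀(x) e^{-iτy} where u₀ = Σ_{j=0}^{2^n-1} e^{-ijτ} 1_{G_j}, and G_j is the cylinder set of sequences whose first n coordinates are the binary digits of j. -/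
open MeasureTheory Filter Topology ENNReal

/-- The `m`-th power (for `m : ℤ`) of the dyadic odometer. -/
def odometerZ (m : ℤ) (x : ℕ → Bool) : ℕ → Bool :=
  if 0 ≤ m then odometer^[m.toNat] x else odometerInv^[(-m).toNat] x

/-- The flow built under the constant ceiling function `1` over the dyadic odometer:
`g̃_s(x, y) = (g^n x, y′)` where `s + y = n + y′`, `n ∈ ℤ`, `0 ≤ y′ < 1`. -/
noncomputable def flowMap (s : ℝ) (z : (ℕ → Bool) × ℝ) : (ℕ → Bool) × ℝ :=
  (odometerZ ⌊s + z.2⌋ z.1, Int.fract (s + z.2))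

/-! Reading the first `n` digits of `x` as a binary number `b(x)`, the odometer is addition of `1`
with carry, so `b(g x) ≡ b(x) + 1 (mod 2^n)`; complementing all digits conjugates `g` to `g⁻¹` and
sends `b` to `-1 - b`, whence `b(g^m x) ≡ b(x) + m` for all `m : ℤ`. The function `u₀` equals
`e^{-iτ b(x)}`, which only depends on `b(x) mod 2^n` because `e^{iτ 2^n} = 1`. The flow moves
`(x, y)` to `(g^m x, y - s - m)`, and the two phases `e^{∓iτm}` cancel. -/

open Finset Complex

def binaryValue (n : ℕ) (x : ℕ → Bool) : ℕ := ∑ i ∈ range n, (x i).toNat * 2 ^ i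

theorem binaryValue_succ (n : ℕ) (x : ℕ → Bool) :
    binaryValue (n + 1) x = binaryValue n x + (x n).toNat * 2 ^ n :=
  sum_range_succ _ _

theorem binaryValue_lt (n : ℕ) (x : ℕ → Bool) : binaryValue n x < 2 ^ n := by
  induction n with
  | zero => simp [binaryValue]
  | succ n ih =>
    rw [binaryValue_succ, pow_succ]
    cases x n <;> simp <;> omega

theorem testBit_binaryValue {n i : ℕ} (x : ℕ → Bool) (hi : i < n) :
    (binaryValue n x).testBit i = x i := by
  induction n with
  | zero => omega
  | succ n ih =>
    rw [binaryValue_succ, add_comm, mul_comm, Nat.testBit_two_pow_mul_add _ (binaryValue_lt n x)]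
    rcases (Nat.lt_succ_iff_lt_or_eq.1 hi) with hi | rfl
    · rw [if_pos hi, ih hi]
    · cases x i <;> simp

theorem eq_binaryValue_iff {n j : ℕ} (x : ℕ → Bool) (hj : j < 2 ^ n) :
    binaryValue n x = j ↔ ∀ i < n, x i = j.testBit i := by
  refine ⟨fun h i hi => h ▸ (testBit_binaryValue x hi).symm, fun h => Nat.eq_of_testBit_eq ?_⟩
  intro i
  by_cases hi : i < n
  · rw [testBit_binaryValue x hi, h i hi]
  · have h2 : 2 ^ n ≤ 2 ^ i := Nat.pow_le_pow_right two_pos (not_lt.1 hi)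
    rw [Nat.testBit_lt_two_pow ((binaryValue_lt n x).trans_le h2),
      Nat.testBit_lt_two_pow (hj.trans_le h2)]

theorem sum_range_two_pow_mul_cylinder_indicator {M : Type*} [NonAssocSemiring M]
    (n : ℕ) (x : ℕ → Bool) (f : ℕ → M) :
    ∑ j ∈ range (2 ^ n), f j * (if ∀ i < n, x i = j.testBit i then 1 else 0) =
      f (binaryValue n x) := by
  simp only [mul_ite, mul_one, mul_zero]
  rw [sum_congr rfl fun j hj => if_congr (eq_binaryValue_iff x (mem_range.1 hj)).symm rfl rfl,
    sum_ite_eq, if_pos (mem_range.2 (binaryValue_lt n x))]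

theorem binaryValue_odometer_add (n : ℕ) (x : ℕ → Bool) :
    binaryValue n (odometer x) + (if ∀ k < n, x k = true then 2 ^ n else 0) =
      binaryValue n x + 1 := by
  induction n with
  | zero => simp [binaryValue]
  | succ n ih =>
    have hn : odometer x n = if ∀ k < n, x k = true then !x n else x n := rfl
    simp only [binaryValue_succ, Nat.forall_lt_succ_right, hn]
    by_cases h : ∀ k < n, x k = true
    · simp only [if_pos h, and_iff_right h] at ih ⊢
      cases x n <;> simp [pow_succ] <;> omega
    · simp only [h, false_and, if_false] at ih ⊢
      omega

theorem odometerInv_eq (x : ℕ → Bool) : odometerInv x = fun i => !odometer (fun j => !x j) i := by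
  funext i
  simp only [odometerInv, odometer, Bool.not_eq_true']
  split_ifs <;> simp

theorem binaryValue_not_add (n : ℕ) (x : ℕ → Bool) :
    binaryValue n (fun i => !x i) + binaryValue n x + 1 = 2 ^ n := by
  induction n with
  | zero => simp [binaryValue]
  | succ n ih =>
    rw [binaryValue_succ, binaryValue_succ, pow_succ]
    cases x n <;> simp <;> omega

theorem binaryValue_odometer_cast (n : ℕ) (x : ℕ → Bool) :
    (binaryValue n (odometer x) : ZMod (2 ^ n)) = binaryValue n x + 1 := by
  have h := congrArg (Nat.cast : ℕ → ZMod (2 ^ n)) (binaryValue_odometer_add n x)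
  have h0 : ((2 ^ n : ℕ) : ZMod (2 ^ n)) = 0 := ZMod.natCast_self _
  push_cast at h h0
  split_ifs at h <;> simpa [h0] using h

theorem binaryValue_not_cast (n : ℕ) (x : ℕ → Bool) :
    (binaryValue n (fun i => !x i) : ZMod (2 ^ n)) = -1 - binaryValue n x := by
  have h := congrArg (Nat.cast : ℕ → ZMod (2 ^ n)) (binaryValue_not_add n x)
  have h0 : ((2 ^ n : ℕ) : ZMod (2 ^ n)) = 0 := ZMod.natCast_self _
  push_cast at h h0
  linear_combination h + h0

theorem binaryValue_odometerInv_cast (n : ℕ) (x : ℕ → Bool) :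
    (binaryValue n (odometerInv x) : ZMod (2 ^ n)) = binaryValue n x - 1 := by
  rw [odometerInv_eq, binaryValue_not_cast, binaryValue_odometer_cast, binaryValue_not_cast]
  ring

theorem binaryValue_odometerZ_cast (n : ℕ) (m : ℤ) (x : ℕ → Bool) :
    (binaryValue n (odometerZ m x) : ZMod (2 ^ n)) = binaryValue n x + m := by
  have hfwd : Function.Semiconj (fun x => (binaryValue n x : ZMod (2 ^ n))) odometer (· + 1) :=
    binaryValue_odometer_cast n
  have hbwd : Function.Semiconj (fun x => (binaryValue n x : ZMod (2 ^ n))) odometerInv (· + -1) :=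
    fun x => (binaryValue_odometerInv_cast n x).trans (sub_eq_add_neg _ _)
  unfold odometerZ
  split_ifs with hm
  · lift m to ℕ using hm
    simpa using (hfwd.iterate_right m).eq x
  · obtain ⟨k, rfl⟩ : ∃ k : ℕ, m = -k := ⟨(-m).toNat, by omega⟩
    simpa [sub_eq_add_neg] using (hbwd.iterate_right k).eq x

theorem exp_neg_I_mul_eq_of_intCast_eq {n : ℕ} {k : ℤ} {τ : ℝ} (hτ : τ = 2 * Real.pi * k / 2 ^ n)
    {a b : ℤ} (h : (a : ZMod (2 ^ n)) = b) :
    cexp (-I * a * τ) = cexp (-I * b * τ) := by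
  obtain ⟨t, ht⟩ := (ZMod.intCast_eq_intCast_iff_dvd_sub a b (2 ^ n)).1 h
  have hτ' : (τ : ℂ) * 2 ^ n = 2 * Real.pi * k := by
    rw [hτ]; push_cast; field_simp
  refine Complex.exp_eq_exp_iff_exists_int.2 ⟨k * t, ?_⟩
  rw [eq_add_of_sub_eq' ht]
  push_cast
  linear_combination (I * t) * hτ'

/-- For `τ = 2πk/2^n`, the explicit function `u(x,y) = u₀(x)·e^{-iτy}` — with
`u₀ = Σ_{j<2^n} e^{-ijτ} 1_{G_j}` and `G_j` the cylinder set of sequences whose first `n`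
coordinates are the binary digits of `j` — is a unitary (modulus-one) element of
`L^∞({0,1}^ℕ × [0,1))` satisfying `θ_s(u) = e^{iτs}·u` for all `s ∈ ℝ`, where
`θ_s(u) = u ∘ g̃_{-s}` for the flow `g̃` built under the ceiling `1` over the odometer. -/
theorem exists_eigenunitary_for_dyadic_tau (k : ℤ) (n : ℕ) (τ : ℝ)
    (hτ : τ = 2 * Real.pi * k / 2 ^ n) :
    let u : (ℕ → Bool) × ℝ → ℂ := fun z =>
      (∑ j ∈ Finset.range (2 ^ n),
          Complex.exp (-(Complex.I) * j * τ) *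
            (if ∀ i < n, z.1 i = (j.testBit i) then 1 else 0)) *
        Complex.exp (-(Complex.I) * τ * z.2)
    (∀ x : ℕ → Bool, ∀ y : ℝ, ‖u (x, y)‖ = 1) ∧
      ∀ s : ℝ, ∀ x : ℕ → Bool, ∀ y : ℝ, y ∈ Set.Ico (0 : ℝ) 1 →
        u (flowMap (-s) (x, y)) = Complex.exp (Complex.I * τ * s) * u (x, y) := by
  intro u
  have hu (x : ℕ → Bool) (y : ℝ) :
      u (x, y) = cexp (-I * binaryValue n x * τ) * cexp (-I * τ * y) := by
    simp only [u, sum_range_two_pow_mul_cylinder_indicator n x fun j : ℕ => cexp (-I * j * τ)]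
  refine ⟨fun x y => ?_, fun s x y _ => ?_⟩
  · simp [hu, Complex.norm_exp]
  · have hshift := exp_neg_I_mul_eq_of_intCast_eq hτ (a := binaryValue n (odometerZ ⌊-s + y⌋ x))
      (b := binaryValue n x + ⌊-s + y⌋) (by push_cast; exact binaryValue_odometerZ_cast ..)
    push_cast at hshift
    rw [flowMap, hu, hu, hshift, ← Int.self_sub_floor, ← exp_add, ← exp_add, ← exp_add]
    congr 1
    push_cast
    ring
end
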